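/- Let 3 < n ≤ k and f : K^n → K. Then f ∈ G_{2,k}^{n,−} if and only if f = t ⊕ g where g depends essentially on all n variables with all minors g_{i←j} identically zero, and t is a totally symmetric n-ary function with Ess(t_{i←j}) = {x_1,...,x_n} \ {x_i, x_j} for all i ≠ j. -/

import Mathlib

open scoped Classical

/-- The identification minor `f_{i←j}`: the `i`-th argument is replaced by the `j`-th. -/
def minor {n k : ℕ} (f : (Fin n → Fin k) → Fin k) (i j : Fin n) :
    (Fin n → Fin k) → Fin k :=
  fun a => f (Function.update a i (a j))

/-- The variable `x_i` is essential in `f`. -/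
def Essential {n k : ℕ} (f : (Fin n → Fin k) → Fin k) (i : Fin n) : Prop :=
  ∃ a : Fin n → Fin k, ∃ b : Fin k, f (Function.update a i b) ≠ f a

/-- The number of essential variables of `f`. -/
noncomputable def essCount {n k : ℕ} (f : (Fin n → Fin k) → Fin k) : ℕ :=
  (Finset.univ.filter (fun i => Essential f i)).card

/-- The essential arity gap of `f`. -/
noncomputable def gap {n k : ℕ} (f : (Fin n → Fin k) → Fin k) : ℕ :=
  essCount f -
    Finset.sup
      (Finset.univ.filter
        (fun p : Fin n × Fin n =>
          p.1 ≠ p.2 ∧ Essential f p.1 ∧ Essential f p.2))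
      (fun p => essCount (minor f p.1 p.2))

/-! The hypothesis that `x_v` is inessential in every `f_{u←v}` says that on a tuple with
`a u = a v` the common value of these two entries can be changed freely. Chaining such moves,
`f` is invariant under permutations of non-injective tuples, so all minors `f_{i←j}` are
conjugate under permutations of the variables; as each of them depends on at most the `n - 2`
variables other than `x_i, x_j`, `gap f = 2` forces all of them to depend on exactly those.
One takes for `t` the symmetrization of `f`, which agrees with `f` on non-injective tuples,
and `g = f - t`. Conversely, a `g` vanishing on non-injective tuples changes no minor, so `f`
and `t` have the same minors. -/

open Function Equiv

variable {n k : ℕ}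

section Minors

variable {f : (Fin n → Fin k) → Fin k}

theorem not_injective_update_self {i j : Fin n} (hij : i ≠ j) (a : Fin n → Fin k) :
    ¬ Injective (update a i (a j)) :=
  fun h => hij (h (by simp [hij.symm]))

theorem minor_congr {f' : (Fin n → Fin k) → Fin k} (h : ∀ a, ¬ Injective a → f a = f' a)
    {i j : Fin n} (hij : i ≠ j) : minor f i j = minor f' i j :=
  funext fun a => h _ (not_injective_update_self hij a)

theorem minor_eq_const_iff {c : Fin k} :
    (∀ i j : Fin n, i ≠ j → minor f i j = fun _ => c) ↔
      ∀ a, ¬ Injective a → f a = c := by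
  constructor
  · intro h a ha
    obtain ⟨i, j, hij, hne⟩ := not_injective_iff.mp ha
    simpa [minor, ← hij] using congrFun (h i j hne) a
  · exact fun h i j hij => funext fun a => h _ (not_injective_update_self hij a)

theorem essential_of_apply_ne {g : (Fin n → Fin k) → Fin k} {c : Fin k} (hn : 1 < n)
    (hg : ∀ a, ¬ Injective a → g a = c) {a : Fin n → Fin k} (ha : g a ≠ c) (m : Fin n) :
    Essential g m := by
  have : Nontrivial (Fin n) := Fin.nontrivial_iff_two_le.mpr hn
  obtain ⟨p, hpm⟩ := exists_ne m
  exact ⟨a, a p, by rw [hg _ (not_injective_update_self hpm.symm a)]; exact ha.symm⟩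

theorem not_essential_minor_left {i j : Fin n} (hij : i ≠ j) : ¬ Essential (minor f i j) i := by
  rintro ⟨a, b, hab⟩
  simp [minor, hij.symm] at hab

theorem Essential.of_minor {i j m : Fin n} (h : Essential (minor f i j) m) (hi : m ≠ i)
    (hj : m ≠ j) : Essential f m := by
  obtain ⟨a, b, hab⟩ := h
  refine ⟨update a i (a j), b, ?_⟩
  simpa [minor, hj.symm, update_comm hi] using hab

theorem essential_comp_perm_iff (f : (Fin n → Fin k) → Fin k) (σ : Perm (Fin n)) (m : Fin n) :
    Essential (fun a => f (a ∘ σ)) m ↔ Essential f (σ.symm m) := by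
  constructor
  · rintro ⟨a, b, hab⟩
    exact ⟨a ∘ σ, b, by rwa [← update_comp_equiv]⟩
  · rintro ⟨a, b, hab⟩
    refine ⟨a ∘ σ.symm, b, ?_⟩
    simpa [update_comp_equiv, comp_assoc] using hab

end Minors

section Counting

variable {f : (Fin n → Fin k) → Fin k}

theorem essCount_eq_iff_forall_essential : essCount f = n ↔ ∀ i, Essential f i := by
  simpa [essCount] using Finset.card_filter_eq_iff (s := Finset.univ) (p := Essential f)

theorem filter_essential_minor_subset {i j : Fin n} (hij : i ≠ j)
    (hj : ¬ Essential (minor f i j) j) :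
    Finset.univ.filter (Essential (minor f i j)) ⊆ {i, j}ᶜ := by
  intro m hm
  simp only [Finset.mem_filter, Finset.mem_univ, true_and] at hm
  simp only [Finset.mem_compl, Finset.mem_insert, Finset.mem_singleton, not_or]
  exact ⟨by rintro rfl; exact not_essential_minor_left hij hm, by rintro rfl; exact hj hm⟩

theorem card_compl_pair {i j : Fin n} (hij : i ≠ j) :
    ({i, j}ᶜ : Finset (Fin n)).card = n - 2 := by
  rw [Finset.card_compl, Finset.card_pair hij, Fintype.card_fin]

theorem essCount_minor_le {i j : Fin n} (hij : i ≠ j) (hj : ¬ Essential (minor f i j) j) :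
    essCount (minor f i j) ≤ n - 2 :=
  card_compl_pair hij ▸ Finset.card_le_card (filter_essential_minor_subset hij hj)

theorem essCount_minor_eq_iff {i j : Fin n} (hij : i ≠ j) (hj : ¬ Essential (minor f i j) j) :
    essCount (minor f i j) = n - 2 ↔
      ∀ m, Essential (minor f i j) m ↔ m ≠ i ∧ m ≠ j := by
  rw [essCount, ← card_compl_pair hij]
  constructor
  · intro h m
    have := Finset.eq_of_subset_of_card_le (filter_essential_minor_subset hij hj) h.ge
    simpa [not_or] using Finset.ext_iff.mp this m
  · intro h
    congr 1
    ext m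
    simp [h]

theorem gap_eq_two_iff (hn : 2 ≤ n) (hess : ∀ i, Essential f i)
    (hle : ∀ i j, i ≠ j → essCount (minor f i j) ≤ n - 2) :
    gap f = 2 ↔ ∃ i j, i ≠ j ∧ essCount (minor f i j) = n - 2 := by
  rw [gap, essCount_eq_iff_forall_essential.2 hess]
  set S := Finset.univ.filter
    (fun p : Fin n × Fin n => p.1 ≠ p.2 ∧ Essential f p.1 ∧ Essential f p.2)
  set φ := fun p : Fin n × Fin n => essCount (minor f p.1 p.2)
  have hS : ∀ p, p ∈ S ↔ p.1 ≠ p.2 := by simp [S, hess]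
  have hsup : S.sup φ ≤ n - 2 := Finset.sup_le fun p hp => hle _ _ ((hS p).1 hp)
  constructor
  · intro h
    have hne : S.Nonempty := ⟨(⟨0, by omega⟩, ⟨1, by omega⟩), by simp [hS, Fin.ext_iff]⟩
    obtain ⟨p, hp, hmax⟩ := S.exists_mem_eq_sup hne φ
    exact ⟨p.1, p.2, (hS p).1 hp, show φ p = n - 2 by omega⟩
  · rintro ⟨i, j, hij, h⟩
    have : essCount (minor f i j) ≤ S.sup φ := Finset.le_sup (f := φ) ((hS (i, j)).2 hij)
    omega

end Counting

section Symmetry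

variable {f : (Fin n → Fin k) → Fin k}

theorem apply_update_update_of_eq (hf : ∀ u v : Fin n, u ≠ v → ¬ Essential (minor f u v) v)
    {u v : Fin n} (huv : u ≠ v) {b : Fin n → Fin k} (hb : b u = b v) (d : Fin k) :
    f (update (update b u d) v d) = f b := by
  have h := hf u v huv
  simp only [Essential, not_exists, not_not] at h
  simpa [minor, ← hb, update_comm huv] using h b d

theorem apply_comp_swap_of_eq (hf : ∀ u v : Fin n, u ≠ v → ¬ Essential (minor f u v) v)
    {x w : Fin n} (hxw : x ≠ w) {a : Fin n → Fin k} (ha : a x = a w) (y : Fin n) :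
    f (a ∘ swap x y) = f a := by
  rcases eq_or_ne y x with rfl | hyx
  · simp
  rcases eq_or_ne y w with rfl | hyw
  · congr 1
    ext z
    simp only [comp_apply, swap_apply_def]
    split_ifs <;> simp_all
  set b := update (update a x (a y)) w (a y)
  have hb : b w = b y := by simp [b, hyx, hyw]
  rw [← apply_update_update_of_eq hf hxw ha (a y),
    ← apply_update_update_of_eq hf hyw.symm hb (a x)]
  congr 1
  ext z
  simp only [b, comp_apply, swap_apply_def, update_apply]
  split_ifs <;> simp_all

theorem apply_comp_swap_of_not_injective
    (hf : ∀ u v : Fin n, u ≠ v → ¬ Essential (minor f u v) v)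
    {a : Fin n → Fin k} (ha : ¬ Injective a) (u v : Fin n) : f (a ∘ swap u v) = f a := by
  by_cases hu : ∃ w, u ≠ w ∧ a u = a w
  · obtain ⟨w, huw, h⟩ := hu
    exact apply_comp_swap_of_eq hf huw h v
  by_cases hv : ∃ w, v ≠ w ∧ a v = a w
  · obtain ⟨w, hvw, h⟩ := hv
    rw [swap_comm]
    exact apply_comp_swap_of_eq hf hvw h u
  push Not at hu hv
  obtain ⟨p, q, hpq, hne⟩ := not_injective_iff.mp ha
  have hpu : p ≠ u := by rintro rfl; exact hu q hne hpq
  have hqu : q ≠ u := by rintro rfl; exact hu p hne.symm hpq.symm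
  have hpv : p ≠ v := by rintro rfl; exact hv q hne hpq
  have hqv : q ≠ v := by rintro rfl; exact hv p hne.symm hpq.symm
  -- applied in turn, each factor moves an entry that currently has an equal partner (at `q`)
  have hswap : swap p u * swap u v * swap v p = swap u v := by
    ext z
    simp only [Perm.mul_apply, swap_apply_def]
    split_ifs <;> simp_all
  calc f (a ∘ swap u v) = f (a ∘ ⇑(swap p u * swap u v * swap v p)) := by rw [hswap]
    _ = f (((a ∘ swap p u) ∘ swap u v) ∘ swap v p) := rfl
    _ = f ((a ∘ swap p u) ∘ swap u v) :=
      apply_comp_swap_of_eq hf hqv.symm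
        (by simp [swap_apply_of_ne_of_ne hqu hqv, swap_apply_of_ne_of_ne hne.symm hqu, hpq]) p
    _ = f (a ∘ swap p u) :=
      apply_comp_swap_of_eq hf hqu.symm (by simp [swap_apply_of_ne_of_ne hne.symm hqu, hpq]) v
    _ = f a := apply_comp_swap_of_eq hf hne hpq u

theorem apply_comp_perm_of_not_injective
    (hf : ∀ u v : Fin n, u ≠ v → ¬ Essential (minor f u v) v) (σ : Perm (Fin n)) :
    ∀ a : Fin n → Fin k, ¬ Injective a → f (a ∘ σ) = f a := by
  induction σ using Perm.swap_induction_on with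
  | one => exact fun _ _ => rfl
  | swap_mul σ x y _ ih =>
    intro a ha
    calc f (a ∘ ⇑(swap x y * σ)) = f ((a ∘ swap x y) ∘ σ) := rfl
      _ = f (a ∘ swap x y) := ih _ (by rwa [Equiv.injective_comp])
      _ = f a := apply_comp_swap_of_not_injective hf ha x y

theorem minor_perm (hf : ∀ u v : Fin n, u ≠ v → ¬ Essential (minor f u v) v)
    {i j : Fin n} (hij : i ≠ j) (σ : Perm (Fin n)) :
    minor f (σ i) (σ j) = fun a => minor f i j (a ∘ σ) := by
  funext a
  have h : update (a ∘ σ) i (a (σ j)) = update a (σ i) (a (σ j)) ∘ σ := by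
    simp [update_comp_equiv]
  simp only [minor, comp_apply, h]
  exact (apply_comp_perm_of_not_injective hf σ _
    (not_injective_update_self (σ.injective.ne hij) a)).symm

theorem exists_perm_apply_eq_and_apply_eq {α : Type*} [DecidableEq α] {a b c d : α}
    (hab : a ≠ b) (hcd : c ≠ d) : ∃ σ : Perm α, σ a = c ∧ σ b = d := by
  have hc : c ≠ swap a c b := fun h => hab ((swap a c).injective ((swap_apply_left a c).trans h))
  exact ⟨swap (swap a c b) d * swap a c, by simp [swap_apply_of_ne_of_ne hc hcd], by simp⟩

theorem essential_minor_iff_of_pair (hf : ∀ u v : Fin n, u ≠ v → ¬ Essential (minor f u v) v)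
    {i₀ j₀ : Fin n} (h₀ : i₀ ≠ j₀)
    (hess₀ : ∀ m, Essential (minor f i₀ j₀) m ↔ m ≠ i₀ ∧ m ≠ j₀)
    {i j : Fin n} (hij : i ≠ j) (m : Fin n) :
    Essential (minor f i j) m ↔ m ≠ i ∧ m ≠ j := by
  obtain ⟨σ, rfl, rfl⟩ := exists_perm_apply_eq_and_apply_eq h₀ hij
  rw [minor_perm hf h₀, essential_comp_perm_iff, hess₀, Ne, Ne, symm_apply_eq, symm_apply_eq]

theorem essential_minor_iff_of_gap_eq_two (hn : 2 ≤ n)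
    (hf : ∀ u v : Fin n, u ≠ v → ¬ Essential (minor f u v) v)
    (hcount : essCount f = n) (hgap : gap f = 2) {i j : Fin n} (hij : i ≠ j) (m : Fin n) :
    Essential (minor f i j) m ↔ m ≠ i ∧ m ≠ j := by
  have hle i j (hij : i ≠ j) := essCount_minor_le hij (hf i j hij)
  obtain ⟨i₀, j₀, h₀, hmax⟩ :=
    (gap_eq_two_iff hn (essCount_eq_iff_forall_essential.1 hcount) hle).1 hgap
  exact essential_minor_iff_of_pair hf h₀
    ((essCount_minor_eq_iff h₀ (hf i₀ j₀ h₀)).1 hmax) hij m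

end Symmetry

section Converse

variable {f : (Fin n → Fin k) → Fin k}

theorem exists_pair_ne_of_ne (hn : 2 < n) (m : Fin n) :
    ∃ i j : Fin n, i ≠ j ∧ m ≠ i ∧ m ≠ j := by
  have : 1 < ({m}ᶜ : Finset (Fin n)).card := by
    rw [Finset.card_compl, Finset.card_singleton, Fintype.card_fin]; omega
  obtain ⟨i, hi, j, hj, hij⟩ := Finset.one_lt_card.mp this
  exact ⟨i, j, hij, by simpa [eq_comm] using hi, by simpa [eq_comm] using hj⟩

theorem essential_of_essential_minor_iff (hn : 2 < n)
    (hminor : ∀ i j, i ≠ j → ∀ m, Essential (minor f i j) m ↔ m ≠ i ∧ m ≠ j)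
    (m : Fin n) :
    Essential f m := by
  obtain ⟨i, j, hij, hi, hj⟩ := exists_pair_ne_of_ne hn m
  exact ((hminor i j hij m).2 ⟨hi, hj⟩).of_minor hi hj

theorem gap_eq_two_of_essential_minor_iff (hn : 2 < n)
    (hminor : ∀ i j, i ≠ j → ∀ m, Essential (minor f i j) m ↔ m ≠ i ∧ m ≠ j) :
    gap f = 2 := by
  have hj i j (hij : i ≠ j) : ¬ Essential (minor f i j) j :=
    fun h => ((hminor i j hij j).1 h).2 rfl
  have hle i j (hij : i ≠ j) := essCount_minor_le hij (hj i j hij)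
  obtain ⟨i, j, hij⟩ := Fintype.exists_pair_of_one_lt_card (α := Fin n)
    (by rw [Fintype.card_fin]; omega)
  exact (gap_eq_two_iff hn.le (essential_of_essential_minor_iff hn hminor) hle).2
    ⟨i, j, hij, (essCount_minor_eq_iff hij (hj i j hij)).2 (hminor i j hij)⟩

end Converse

section Decomposition

variable [NeZero k]

/-- Subtracting the indicator of injective tuples keeps `f - symmetricPart f` nonzero even when
`f` is already totally symmetric. -/
noncomputable def symmetricPart (f : (Fin n → Fin k) → Fin k) : (Fin n → Fin k) → Fin k :=
  fun a => f (a ∘ Tuple.sort a) - if Injective a then 1 else 0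

variable {f : (Fin n → Fin k) → Fin k}

theorem symmetricPart_comp_perm (σ : Perm (Fin n)) (a : Fin n → Fin k) :
    symmetricPart f (a ∘ σ) = symmetricPart f a := by
  simp only [symmetricPart, Tuple.comp_perm_comp_sort_eq_comp_sort, Equiv.injective_comp]

theorem sub_symmetricPart_of_not_injective
    (hf : ∀ u v : Fin n, u ≠ v → ¬ Essential (minor f u v) v)
    {a : Fin n → Fin k} (ha : ¬ Injective a) : f a - symmetricPart f a = 0 := by
  simp [symmetricPart, ha, apply_comp_perm_of_not_injective hf _ a ha]

theorem sub_symmetricPart_comp_sort {a : Fin n → Fin k} (ha : Injective a) :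
    f (a ∘ Tuple.sort a) - symmetricPart f (a ∘ Tuple.sort a) = 1 := by
  simp [symmetricPart, Tuple.comp_perm_comp_sort_eq_comp_sort, ha.comp (Tuple.sort a).injective]

theorem essential_sub_symmetricPart (hn : 1 < n) (hnk : n ≤ k)
    (hf : ∀ u v : Fin n, u ≠ v → ¬ Essential (minor f u v) v) (m : Fin n) :
    Essential (fun a => f a - symmetricPart f a) m := by
  refine essential_of_apply_ne hn (fun a ha => sub_symmetricPart_of_not_injective hf ha)
    (a := Fin.castLE hnk ∘ Tuple.sort (Fin.castLE hnk)) ?_ m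
  rw [sub_symmetricPart_comp_sort (Fin.castLE_injective hnk), Ne, Fin.ext_iff, Fin.val_one',
    Fin.val_zero, Nat.one_mod_eq_zero_iff]
  omega

end Decomposition

theorem mem_G_minus_iff {k n : ℕ} (hn : 3 < n) (hnk : n ≤ k)
    (f : (Fin n → Fin k) → Fin k) :
    (essCount f = n ∧ gap f = 2 ∧
      ∀ u v : Fin n, u ≠ v → ¬ Essential (minor f u v) v) ↔
      ∃ t g : (Fin n → Fin k) → Fin k,
        f = (fun a => t a + g a) ∧
        (∀ i : Fin n, Essential g i) ∧
        (∀ i j : Fin n, i ≠ j →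
          minor g i j = fun _ => (⟨0, by omega⟩ : Fin k)) ∧
        (∀ σ : Equiv.Perm (Fin n), ∀ a : Fin n → Fin k, t (a ∘ σ) = t a) ∧
        (∀ i j : Fin n, i ≠ j →
          ∀ m : Fin n, Essential (minor t i j) m ↔ (m ≠ i ∧ m ≠ j)) := by
  have : NeZero k := ⟨by omega⟩
  constructor
  · rintro ⟨hcount, hgap, hf⟩
    have hft : ∀ a, ¬ Injective a → symmetricPart f a = f a := fun a ha =>
      (sub_eq_zero.1 (sub_symmetricPart_of_not_injective hf ha)).symm
    refine ⟨symmetricPart f, fun a => f a - symmetricPart f a, by simp,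
      essential_sub_symmetricPart (by omega) hnk hf,
      minor_eq_const_iff.2 fun a ha => sub_symmetricPart_of_not_injective hf ha,
      symmetricPart_comp_perm, fun i j hij => ?_⟩
    rw [minor_congr hft hij]
    exact essential_minor_iff_of_gap_eq_two (by omega) hf hcount hgap hij
  · rintro ⟨t, g, hfg, -, hg, -, ht⟩
    have hft : ∀ a, ¬ Injective a → f a = t a := fun a ha => by
      simp only [hfg, minor_eq_const_iff.1 hg a ha]
      exact add_zero _
    have hminor : ∀ i j, i ≠ j → ∀ m, Essential (minor f i j) m ↔ m ≠ i ∧ m ≠ j :=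
      fun i j hij => minor_congr hft hij ▸ ht i j hij
    have hess := essential_of_essential_minor_iff (by omega) hminor
    exact ⟨essCount_eq_iff_forall_essential.2 hess,
      gap_eq_two_of_essential_minor_iff (by omega) hminor,
      fun u v huv h => ((hminor u v huv v).1 h).2 rfl⟩
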